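/- arXiv:1808.04737 — 4 statements merged into one kernel-verified Lean document; each statement's English description precedes it below -/
import Mathlib

section
/- Let X be a real normed vector space, V ⊆ X a finite-dimensional linear subspace, and C ⊆ X a compact set such that σ₁ − σ₂ ∈ V for all σ₁, σ₂ ∈ C. Let H be a real Hilbert space, Λ : C → B(H) any map, and D : C → L(V, B(H)) a continuous map (C carrying the metric of X, and L(V,B(H)) the operator norm) such that: (i) (monotonicity) for all σ₁, σ₂ ∈ C and all g ∈ H, ⟨(D(σ₂)(σ₁ − σ₂))g, g⟩ ≤ ⟨g, (Λ(σ₁) − Λ(σ₂))g⟩; and (ii) (positivity) for all τ₁, τ₂ ∈ C and every κ ∈ V with ‖κ‖ = 1 there exists g ∈ H with ‖g‖ = 1 and max{⟨(D(τ₁)κ)g, g⟩, −⟨(D(τ₂)κ)g, g⟩} > 0. Then there exists a constant c > 0 such that ‖Λ(σ₁) − Λ(σ₂)‖ ≥ c‖σ₁ − σ₂‖ for all σ₁, σ₂ ∈ C. -/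
open scoped RealInnerProductSpace

/-- Abstract version of Theorem 2.1: Lipschitz stability from monotonicity,
continuity of the derivative, and the localized-potentials positivity property. -/
theorem stmt_0
    {X : Type*} [NormedAddCommGroup X] [NormedSpace ℝ X]
    {H : Type*} [NormedAddCommGroup H] [InnerProductSpace ℝ H]
    (V : Submodule ℝ X) [FiniteDimensional ℝ V]
    (C : Set X) (hC : IsCompact C)
    (hdiff : ∀ σ₁ ∈ C, ∀ σ₂ ∈ C, σ₁ - σ₂ ∈ V)
    (Λ : C → (H →L[ℝ] H))
    (D : C → (V →L[ℝ] (H →L[ℝ] H)))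
    (hD : Continuous D)
    (mono : ∀ (σ₁ σ₂ : C) (g : H),
      ⟪(D σ₂ ⟨(σ₁ : X) - (σ₂ : X), hdiff _ σ₁.2 _ σ₂.2⟩) g, g⟫
        ≤ ⟪g, (Λ σ₁ - Λ σ₂) g⟫)
    (pos : ∀ (τ₁ τ₂ : C) (κ : V), ‖κ‖ = 1 →
      ∃ g : H, ‖g‖ = 1 ∧
        0 < max (⟪(D τ₁ κ) g, g⟫) (-⟪(D τ₂ κ) g, g⟫)) :
    ∃ c > 0, ∀ (σ₁ σ₂ : C),
      c * ‖(σ₁ : X) - (σ₂ : X)‖ ≤ ‖Λ σ₁ - Λ σ₂‖ := by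
  classical
  by_cases hne : ∃ σ₁ σ₂ : C, (σ₁ : X) ≠ (σ₂ : X)
  · obtain ⟨σa, σb, hab⟩ := hne
    haveI : CompactSpace ↥C := isCompact_iff_compactSpace.mp hC
    set S : Set V := Metric.sphere (0 : V) 1 with hS
    let T := ↥C × ↥C × ↥S
    let φ : H → T → ℝ := fun g p =>
      max (⟪(D p.1 (p.2.2 : V)) g, g⟫) (-⟪(D p.2.1 (p.2.2 : V)) g, g⟫)
    have hφ : ∀ g : H, Continuous (φ g) := by
      intro g
      have hk : Continuous fun p : T => (p.2.2 : V) :=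
        continuous_subtype_val.comp (continuous_snd.comp continuous_snd)
      have h1 : Continuous fun p : T => (D p.1) (p.2.2 : V) :=
        isBoundedBilinearMap_apply.continuous.comp ((hD.comp continuous_fst).prodMk hk)
      have h1' : Continuous fun p : T => ((D p.1) (p.2.2 : V)) g :=
        isBoundedBilinearMap_apply.continuous.comp (h1.prodMk continuous_const)
      have h2 : Continuous fun p : T => (D p.2.1) (p.2.2 : V) :=
        isBoundedBilinearMap_apply.continuous.comp
          ((hD.comp (continuous_fst.comp continuous_snd)).prodMk hk)
      have h2' : Continuous fun p : T => ((D p.2.1) (p.2.2 : V)) g :=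
        isBoundedBilinearMap_apply.continuous.comp (h2.prodMk continuous_const)
      exact (h1'.inner continuous_const).max (h2'.inner continuous_const).neg
    let U : {g : H // ‖g‖ = 1} → Set T := fun g => {p | 0 < φ g.1 p}
    have hUopen : ∀ g, IsOpen (U g) := fun g => isOpen_lt continuous_const (hφ g.1)
    have hcov : (Set.univ : Set T) ⊆ ⋃ g, U g := by
      rintro ⟨τ₁, τ₂, κ⟩ -
      obtain ⟨g, hg1, hgpos⟩ :=
        pos τ₁ τ₂ (κ : V) (by simpa [mem_sphere_zero_iff_norm] using κ.2)
      exact Set.mem_iUnion.2 ⟨⟨g, hg1⟩, hgpos⟩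
    obtain ⟨t, ht⟩ := isCompact_univ.elim_finite_subcover U hUopen hcov
    -- a point of T
    have hdab : (0 : ℝ) < ‖(σa : X) - (σb : X)‖ := by
      rw [norm_pos_iff]; exact sub_ne_zero.mpr hab
    have hmemS : ∀ (σ₁ σ₂ : C), (σ₁ : X) ≠ (σ₂ : X) →
        (‖(σ₁ : X) - (σ₂ : X)‖⁻¹ •
          (⟨(σ₁ : X) - (σ₂ : X), hdiff _ σ₁.2 _ σ₂.2⟩ : V)) ∈ S := by
      intro σ₁ σ₂ h
      have hd : (0 : ℝ) < ‖(σ₁ : X) - (σ₂ : X)‖ := by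
        rw [norm_pos_iff]; exact sub_ne_zero.mpr h
      have hv : ‖(⟨(σ₁ : X) - (σ₂ : X), hdiff _ σ₁.2 _ σ₂.2⟩ : V)‖
          = ‖(σ₁ : X) - (σ₂ : X)‖ := rfl
      rw [hS, mem_sphere_zero_iff_norm, norm_smul, hv, norm_inv, Real.norm_eq_abs,
        abs_of_pos hd, inv_mul_cancel₀ hd.ne']
    let p₀ : T := (σb, σa, ⟨_, hmemS σa σb hab⟩)
    have htne : t.Nonempty := by
      obtain ⟨g, hg, -⟩ := Set.mem_iUnion₂.1 (ht (Set.mem_univ p₀))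
      exact ⟨g, hg⟩
    let f : T → ℝ := fun p => t.sup' htne (fun g => φ g.1 p)
    have hfcont : Continuous f :=
      Continuous.finset_sup'_apply htne (fun g _ => hφ g.1)
    obtain ⟨pm, -, hmin⟩ :=
      isCompact_univ.exists_isMinOn ⟨p₀, Set.mem_univ _⟩ hfcont.continuousOn
    have hcpos : 0 < f pm := by
      obtain ⟨g, hg, hgpos⟩ := Set.mem_iUnion₂.1 (ht (Set.mem_univ pm))
      exact lt_of_lt_of_le hgpos (Finset.le_sup' (fun g => φ g.1 pm) hg)
    refine ⟨f pm, hcpos, fun σ₁ σ₂ => ?_⟩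
    by_cases h : (σ₁ : X) = (σ₂ : X)
    · simp [h]
    · have hd : (0 : ℝ) < ‖(σ₁ : X) - (σ₂ : X)‖ := by
        rw [norm_pos_iff]; exact sub_ne_zero.mpr h
      set d : ℝ := ‖(σ₁ : X) - (σ₂ : X)‖ with hd'
      set vδ : V := (⟨(σ₁ : X) - (σ₂ : X), hdiff _ σ₁.2 _ σ₂.2⟩ : V) with hvδ
      let p : T := (σ₂, σ₁, ⟨d⁻¹ • vδ, hmemS σ₁ σ₂ h⟩)
      obtain ⟨g, hgt, hfp⟩ := Finset.exists_mem_eq_sup' htne (fun g => φ g.1 p)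
      have hgn : ‖(g : H)‖ = 1 := g.2
      have hcle : f pm ≤ φ g.1 p := by
        have h' : f pm ≤ f p := hmin (Set.mem_univ p)
        exact le_of_le_of_eq h' hfp
      set N : ℝ := ‖Λ σ₁ - Λ σ₂‖ with hN
      -- first bound
      have key : ∀ (τ₁ τ₂ : C) (w : V),
          (w : X) = (τ₁ : X) - (τ₂ : X) →
          ⟪(D τ₂ w) (g : H), (g : H)⟫ ≤ ‖Λ τ₁ - Λ τ₂‖ := by
        intro τ₁ τ₂ w hw
        have hw' : w = (⟨(τ₁ : X) - (τ₂ : X), hdiff _ τ₁.2 _ τ₂.2⟩ : V) :=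
          Subtype.ext hw
        calc ⟪(D τ₂ w) (g : H), (g : H)⟫
            ≤ ⟪(g : H), (Λ τ₁ - Λ τ₂) (g : H)⟫ := by rw [hw']; exact mono τ₁ τ₂ g
          _ ≤ ‖(g : H)‖ * ‖(Λ τ₁ - Λ τ₂) (g : H)‖ := real_inner_le_norm _ _
          _ ≤ ‖(g : H)‖ * (‖Λ τ₁ - Λ τ₂‖ * ‖(g : H)‖) := by
              gcongr; exact ContinuousLinearMap.le_opNorm _ _
          _ = ‖Λ τ₁ - Λ τ₂‖ := by rw [hgn]; ring
      have b1 : ⟪(D σ₂ (d⁻¹ • vδ)) (g : H), (g : H)⟫ ≤ d⁻¹ * N := by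
        rw [map_smul, ContinuousLinearMap.smul_apply, real_inner_smul_left]
        have := key σ₁ σ₂ vδ rfl
        have hdinv : (0 : ℝ) ≤ d⁻¹ := by positivity
        exact mul_le_mul_of_nonneg_left this hdinv
      have b2 : -⟪(D σ₁ (d⁻¹ • vδ)) (g : H), (g : H)⟫ ≤ d⁻¹ * N := by
        rw [map_smul, ContinuousLinearMap.smul_apply, real_inner_smul_left, ← mul_neg]
        have h2 : -⟪(D σ₁ vδ) (g : H), (g : H)⟫ = ⟪(D σ₁ (-vδ)) (g : H), (g : H)⟫ := by
          rw [map_neg, ContinuousLinearMap.neg_apply, inner_neg_left]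
        have hneg : ((-vδ : V) : X) = (σ₂ : X) - (σ₁ : X) := by
          simp [hvδ, neg_sub]
        have := key σ₂ σ₁ (-vδ) hneg
        rw [h2]
        have hN2 : ‖Λ σ₂ - Λ σ₁‖ = N := by rw [hN, norm_sub_rev]
        rw [hN2] at this
        have hdinv : (0 : ℝ) ≤ d⁻¹ := by positivity
        exact mul_le_mul_of_nonneg_left this hdinv
      have hφle : φ g.1 p ≤ d⁻¹ * N := max_le b1 b2
      have : f pm ≤ d⁻¹ * N := le_trans hcle hφle
      calc f pm * d ≤ (d⁻¹ * N) * d := mul_le_mul_of_nonneg_right this hd.le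
        _ = N := by field_simp
  · push_neg at hne
    refine ⟨1, one_pos, fun σ₁ σ₂ => ?_⟩
    rw [hne σ₁ σ₂]
    simpa using norm_nonneg _
end

section
/- Let X be a real normed vector space, V ⊆ X a finite-dimensional linear subspace, and C ⊆ X a compact set such that σ₁ − σ₂ ∈ V for all σ₁, σ₂ ∈ C. Let H be a real Hilbert space, Λ : C → B(H) any map, and D : C → L(V, B(H)) a continuous map such that: (i) (monotonicity) for all σ₁, σ₂ ∈ C and all g ∈ H, ⟨(D(σ₂)(σ₁ − σ₂))g, g⟩ ≤ ⟨g, (Λ(σ₁) − Λ(σ₂))g⟩; and (ii) (positivity) for all τ₁, τ₂ ∈ C and every κ ∈ V with ‖κ‖ = 1 there exists g ∈ H with ‖g‖ = 1 and max{⟨(D(τ₁)κ)g, g⟩, −⟨(D(τ₂)κ)g, g⟩} > 0. Let G₁ ⊆ G₂ ⊆ … be a nondecreasing sequence of linear subspaces of H whose union is dense in H. Then there exist N ∈ ℕ and c > 0 such that for all n ≥ N and all σ₁, σ₂ ∈ C: sup{ |⟨g, (Λ(σ₁) − Λ(σ₂))g⟩| : g ∈ G_n, ‖g‖ = 1 }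 ≥ c‖σ₁ − σ₂‖. In particular, for n ≥ N and σ₁, σ₂ ∈ C, if ⟨g, (Λ(σ₁) − Λ(σ₂))g⟩ = 0 for all g ∈ G_n, then σ₁ = σ₂. -/
set_option maxHeartbeats 1000000

open scoped RealInnerProductSpace

/-- Abstract version of Theorem 2.2: Lipschitz stability and uniqueness for
Galerkin projections onto an exhausting nondecreasing sequence of subspaces. -/
theorem stmt_1
    {X : Type*} [NormedAddCommGroup X] [NormedSpace ℝ X]
    {H : Type*} [NormedAddCommGroup H] [InnerProductSpace ℝ H]
    (V : Submodule ℝ X) [FiniteDimensional ℝ V]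
    (C : Set X) (hC : IsCompact C)
    (hdiff : ∀ σ₁ ∈ C, ∀ σ₂ ∈ C, σ₁ - σ₂ ∈ V)
    (Λ : C → (H →L[ℝ] H))
    (D : C → (V →L[ℝ] (H →L[ℝ] H)))
    (hD : Continuous D)
    (mono : ∀ (σ₁ σ₂ : C) (g : H),
      ⟪(D σ₂ ⟨(σ₁ : X) - (σ₂ : X), hdiff _ σ₁.2 _ σ₂.2⟩) g, g⟫
        ≤ ⟪g, (Λ σ₁ - Λ σ₂) g⟫)
    (pos : ∀ (τ₁ τ₂ : C) (κ : V), ‖κ‖ = 1 →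
      ∃ g : H, ‖g‖ = 1 ∧
        0 < max (⟪(D τ₁ κ) g, g⟫) (-⟪(D τ₂ κ) g, g⟫))
    (G : ℕ → Submodule ℝ H)
    (hGmono : Monotone G)
    (hGdense : Dense (⋃ n, (G n : Set H))) :
    ∃ N : ℕ, ∃ c > 0, ∀ n ≥ N, ∀ (σ₁ σ₂ : C),
      (c * ‖(σ₁ : X) - (σ₂ : X)‖ ≤
        sSup {r : ℝ | ∃ g ∈ G n, ‖g‖ = 1 ∧ r = |⟪g, (Λ σ₁ - Λ σ₂) g⟫|}) ∧
      ((∀ g ∈ G n, ⟪g, (Λ σ₁ - Λ σ₂) g⟫ = 0) → (σ₁ : X) = (σ₂ : X)) := by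
  classical
  -- Step A: for each point, a unit vector in some G n with positive value
  have stepA : ∀ (τ₁ τ₂ : C) (κ : V), ‖κ‖ = 1 →
      ∃ n, ∃ g, g ∈ G n ∧ ‖g‖ = 1 ∧
        0 < max (⟪(D τ₁ κ) g, g⟫) (-⟪(D τ₂ κ) g, g⟫) := by
    intro τ₁ τ₂ κ hκ
    obtain ⟨g₀, hg₀norm, hg₀pos⟩ := pos τ₁ τ₂ κ hκ
    have hcont : Continuous (fun g : H =>
        max (⟪(D τ₁ κ) g, g⟫) (-⟪(D τ₂ κ) g, g⟫)) := by
      apply Continuous.max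
      · exact Continuous.inner (D τ₁ κ).continuous continuous_id
      · exact (Continuous.inner (D τ₂ κ).continuous continuous_id).neg
    have hU : IsOpen {g : H | 0 < max (⟪(D τ₁ κ) g, g⟫) (-⟪(D τ₂ κ) g, g⟫)} :=
      isOpen_lt continuous_const hcont
    obtain ⟨g', hg'mem, hg'U⟩ := hGdense.exists_mem_open hU ⟨g₀, hg₀pos⟩
    simp only [Set.mem_iUnion, SetLike.mem_coe] at hg'mem
    obtain ⟨n, hg'n⟩ := hg'mem
    simp only [Set.mem_setOf_eq] at hg'U
    have hg'0 : g' ≠ 0 := by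
      rintro rfl
      simp at hg'U
    have hnorm : (0:ℝ) < ‖g'‖ := norm_pos_iff.mpr hg'0
    have hinv : (0:ℝ) < ‖g'‖⁻¹ := inv_pos.mpr hnorm
    refine ⟨n, ‖g'‖⁻¹ • g', Submodule.smul_mem _ _ hg'n, ?_, ?_⟩
    · rw [norm_smul, norm_inv, norm_norm, inv_mul_cancel₀ hnorm.ne']
    · have key : ∀ A : H →L[ℝ] H,
          ⟪A (‖g'‖⁻¹ • g'), ‖g'‖⁻¹ • g'⟫ = ‖g'‖⁻¹ * (‖g'‖⁻¹ * ⟪A g', g'⟫) := by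
        intro A
        rw [map_smul, real_inner_smul_right]
        congr 1
        exact real_inner_smul_left _ _ _
      rcases lt_max_iff.mp hg'U with h | h
      · refine lt_max_iff.mpr (Or.inl ?_)
        rw [key]
        positivity
      · refine lt_max_iff.mpr (Or.inr ?_)
        rw [key]
        nlinarith [mul_pos (mul_pos hinv hinv) h]
  -- Step B: uniform N and c by compactness
  haveI : CompactSpace ↥C := isCompact_iff_compactSpace.mp hC
  haveI : CompactSpace ↥(Metric.sphere (0:V) 1) :=
    isCompact_iff_compactSpace.mp (isCompact_sphere 0 1)
  have stepB : ∃ N, ∃ c > (0:ℝ), ∀ (τ₁ τ₂ : C) (κ : V), ‖κ‖ = 1 →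
      ∃ g, g ∈ G N ∧ ‖g‖ = 1 ∧
        c ≤ max (⟪(D τ₁ κ) g, g⟫) (-⟪(D τ₂ κ) g, g⟫) := by
    by_cases hT : Nonempty (↥C × ↥C × ↥(Metric.sphere (0:V) 1))
    · have hA : ∀ p : ↥C × ↥C × ↥(Metric.sphere (0:V) 1),
          ∃ n, ∃ g, g ∈ G n ∧ ‖g‖ = 1 ∧
            0 < max (⟪(D p.1 p.2.2) g, g⟫) (-⟪(D p.2.1 p.2.2) g, g⟫) := by
        intro p
        exact stepA p.1 p.2.1 p.2.2 (norm_eq_of_mem_sphere p.2.2)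
      choose nn gg hmem hnorm hpos using hA
      set W : (↥C × ↥C × ↥(Metric.sphere (0:V) 1)) → Set (↥C × ↥C × ↥(Metric.sphere (0:V) 1)) :=
        fun p => {q | max (⟪(D p.1 p.2.2) (gg p), gg p⟫) (-⟪(D p.2.1 p.2.2) (gg p), gg p⟫) / 2
          < max (⟪(D q.1 q.2.2) (gg p), gg p⟫) (-⟪(D q.2.1 q.2.2) (gg p), gg p⟫)} with hW
      have hap : ∀ (g : H) (f : (↥C × ↥C × ↥(Metric.sphere (0:V) 1)) → ↥C), Continuous f →
          Continuous (fun q : ↥C × ↥C × ↥(Metric.sphere (0:V) 1) => ((D (f q)) (q.2.2 : V)) g) := by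
        intro g f hf
        have h1 : Continuous (fun q : ↥C × ↥C × ↥(Metric.sphere (0:V) 1) =>
            ((D (f q), (q.2.2 : V)) : (V →L[ℝ] (H →L[ℝ] H)) × V)) :=
          (hD.comp hf).prodMk
            (continuous_subtype_val.comp (continuous_snd.comp continuous_snd))
        have h2 : Continuous (fun q : ↥C × ↥C × ↥(Metric.sphere (0:V) 1) =>
            (D (f q)) (q.2.2 : V)) :=
          isBoundedBilinearMap_apply.continuous.comp h1
        exact isBoundedBilinearMap_apply.continuous.comp (h2.prodMk continuous_const)
      have hWopen : ∀ p, IsOpen (W p) := by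
        intro p
        apply isOpen_lt continuous_const
        apply Continuous.max
        · exact Continuous.inner (𝕜 := ℝ) (hap (gg p) _ continuous_fst) continuous_const
        · exact (Continuous.inner (𝕜 := ℝ)
            (hap (gg p) _ (continuous_fst.comp continuous_snd)) continuous_const).neg
      have hWmem : ∀ p, p ∈ W p := fun p => half_lt_self (hpos p)
      obtain ⟨s, hs⟩ := isCompact_univ.elim_finite_subcover W hWopen
        (fun p _ => Set.mem_iUnion.mpr ⟨p, hWmem p⟩)
      have hsne : s.Nonempty := by
        obtain ⟨p⟩ := hT
        obtain ⟨q, hq, _⟩ := Set.mem_iUnion₂.mp (hs (Set.mem_univ p))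
        exact ⟨q, hq⟩
      refine ⟨s.sup nn, s.inf' hsne (fun p =>
        max (⟪(D p.1 p.2.2) (gg p), gg p⟫) (-⟪(D p.2.1 p.2.2) (gg p), gg p⟫) / 2), ?_, ?_⟩
      · exact (Finset.lt_inf'_iff _).mpr (fun p _ => half_pos (hpos p))
      · intro τ₁ τ₂ κ hκ
        have hκs : κ ∈ Metric.sphere (0:V) 1 := by simpa using hκ
        set q : ↥C × ↥C × ↥(Metric.sphere (0:V) 1) := (τ₁, τ₂, ⟨κ, hκs⟩) with hq
        obtain ⟨p, hps, hpq⟩ := Set.mem_iUnion₂.mp (hs (Set.mem_univ q))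
        refine ⟨gg p, hGmono (Finset.le_sup hps) (hmem p), hnorm p, ?_⟩
        exact le_trans (Finset.inf'_le _ hps) (le_of_lt hpq)
    · exact ⟨0, 1, one_pos, fun τ₁ τ₂ κ hκ =>
        absurd ⟨τ₁, τ₂, ⟨κ, by simpa using hκ⟩⟩ hT⟩
  -- Step C: conclude
  obtain ⟨N, c, hc, hB⟩ := stepB
  refine ⟨N, c, hc, fun n hn σ₁ σ₂ => ?_⟩
  set S : Set ℝ := {r : ℝ | ∃ g ∈ G n, ‖g‖ = 1 ∧ r = |⟪g, (Λ σ₁ - Λ σ₂) g⟫|} with hS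
  have hbdd : BddAbove S := by
    refine ⟨‖Λ σ₁ - Λ σ₂‖, ?_⟩
    rintro r ⟨g, hg, hgnorm, rfl⟩
    calc |⟪g, (Λ σ₁ - Λ σ₂) g⟫| ≤ ‖g‖ * ‖(Λ σ₁ - Λ σ₂) g‖ := abs_real_inner_le_norm _ _
      _ ≤ ‖g‖ * (‖Λ σ₁ - Λ σ₂‖ * ‖g‖) := by
          gcongr
          exact (Λ σ₁ - Λ σ₂).le_opNorm g
      _ = ‖Λ σ₁ - Λ σ₂‖ := by rw [hgnorm]; ring
  have hmain : c * ‖(σ₁ : X) - (σ₂ : X)‖ ≤ sSup S := by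
    by_cases heq : (σ₁ : X) = (σ₂ : X)
    · rw [heq, sub_self, norm_zero, mul_zero]
      apply Real.sSup_nonneg
      rintro r ⟨g, hg, hgnorm, rfl⟩
      exact abs_nonneg _
    · set v : V := ⟨(σ₁ : X) - (σ₂ : X), hdiff _ σ₁.2 _ σ₂.2⟩ with hv
      have hvnorm : ‖v‖ = ‖(σ₁ : X) - (σ₂ : X)‖ := rfl
      have hd : (0:ℝ) < ‖v‖ := by
        rw [hvnorm]
        exact norm_pos_iff.mpr (sub_ne_zero.mpr heq)
      set d : ℝ := ‖v‖ with hdd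
      set κ : V := d⁻¹ • v with hκdef
      have hκ1 : ‖κ‖ = 1 := by
        rw [hκdef, norm_smul, norm_inv, Real.norm_eq_abs, abs_of_pos hd,
          inv_mul_cancel₀ hd.ne']
      obtain ⟨g, hgmem, hgnorm, hgF⟩ := hB σ₂ σ₁ κ hκ1
      have hgmem' : g ∈ G n := hGmono hn hgmem
      have hvκ : d • κ = v := by
        rw [hκdef, smul_smul, mul_inv_cancel₀ hd.ne', one_smul]
      have key : ∀ τ : C, ⟪(D τ v) g, g⟫ = d * ⟪(D τ κ) g, g⟫ := by
        intro τ
        rw [← hvκ, map_smul]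
        rw [ContinuousLinearMap.smul_apply]
        exact real_inner_smul_left _ _ _
      have h1 : ⟪(D σ₂ v) g, g⟫ ≤ ⟪g, (Λ σ₁ - Λ σ₂) g⟫ := mono σ₁ σ₂ g
      have h2 : -⟪(D σ₁ v) g, g⟫ ≤ -⟪g, (Λ σ₁ - Λ σ₂) g⟫ := by
        have hneg : (-v : V) = ⟨(σ₂ : X) - (σ₁ : X), hdiff _ σ₂.2 _ σ₁.2⟩ :=
          Subtype.ext (by simp [hv, neg_sub])
        have h := mono σ₂ σ₁ g
        rw [← hneg, map_neg, ContinuousLinearMap.neg_apply, inner_neg_left] at h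
        have hΛ : ⟪g, (Λ σ₂ - Λ σ₁) g⟫ = -⟪g, (Λ σ₁ - Λ σ₂) g⟫ := by
          simp only [ContinuousLinearMap.sub_apply, inner_sub_right]
          ring
        linarith [h, hΛ ▸ h]
      have habs : c * d ≤ |⟪g, (Λ σ₁ - Λ σ₂) g⟫| := by
        rcases le_max_iff.mp hgF with h | h
        · have : c * d ≤ d * ⟪(D σ₂ κ) g, g⟫ := by nlinarith
          calc c * d ≤ ⟪(D σ₂ v) g, g⟫ := by rw [key]; exact this
            _ ≤ ⟪g, (Λ σ₁ - Λ σ₂) g⟫ := h1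
            _ ≤ |⟪g, (Λ σ₁ - Λ σ₂) g⟫| := le_abs_self _
        · have : c * d ≤ d * (-⟪(D σ₁ κ) g, g⟫) := by nlinarith
          calc c * d ≤ -⟪(D σ₁ v) g, g⟫ := by rw [key]; linarith
            _ ≤ -⟪g, (Λ σ₁ - Λ σ₂) g⟫ := h2
            _ ≤ |⟪g, (Λ σ₁ - Λ σ₂) g⟫| := neg_le_abs _
      calc c * ‖(σ₁ : X) - (σ₂ : X)‖ = c * d := rfl
        _ ≤ |⟪g, (Λ σ₁ - Λ σ₂) g⟫| := habs
        _ ≤ sSup S := le_csSup hbdd ⟨g, hgmem', hgnorm, rfl⟩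
  refine ⟨hmain, fun hzero => ?_⟩
  have hsup0 : sSup S ≤ 0 := by
    apply Real.sSup_le _ le_rfl
    rintro r ⟨g, hg, hgnorm, rfl⟩
    rw [hzero g hg]
    simp
  have : ‖(σ₁ : X) - (σ₂ : X)‖ = 0 := by
    nlinarith [norm_nonneg ((σ₁ : X) - (σ₂ : X)), hmain, hsup0]
  exact sub_eq_zero.mp (norm_eq_zero.mp this)
end

section
/- Let X be a real normed vector space, V ⊆ X a finite-dimensional linear subspace, and C ⊆ X a compact set such that σ₁ − σ₂ ∈ V for all σ₁, σ₂ ∈ C. Let H be a real Hilbert space and D : C → L(V, B(H)) a continuous map satisfying the positivity property: for all τ₁, τ₂ ∈ C and every κ ∈ V with ‖κ‖ = 1 there exists g ∈ H with ‖g‖ = 1 and max{⟨(D(τ₁)κ)g, g⟩, −⟨(D(τ₂)κ)g, g⟩} > 0. For each M ∈ ℕ, let E_M be a real inner product space, R_M : C → B(E_M) and D_M : C → L(V, B(E_M)) maps, and Q_M : H → E_M a bounded linear map; let K > 0 be a constant and (ε_M)_{M∈ℕ} a sequence of nonnegative reals with ε_M → 0, such that for all M: (i) (monotonicity) ⟨(D_M(σ₂)(σ₁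 − σ₂))J, J⟩ ≤ ⟨(R_M(σ₁) − R_M(σ₂))J, J⟩ for all σ₁, σ₂ ∈ C and J ∈ E_M; (ii) ‖Q_M g‖ ≤ K‖g‖ for all g ∈ H; (iii) (approximation) |⟨(D(σ)κ)g, g⟩ − ⟨(D_M(σ)κ)(Q_M g), Q_M g⟩| ≤ ε_M for all σ ∈ C, all κ ∈ V with ‖κ‖ = 1, and all g ∈ H with ‖g‖ = 1. Then there exist N ∈ ℕ and c > 0 such that ‖R_M(σ₁) − R_M(σ₂)‖ ≥ c‖σ₁ − σ₂‖ for all M ≥ N and all σ₁, σ₂ ∈ C. In particular, for M ≥ N, R_M(σ₁) = R_M(σ₂) if and only if σ₁ = σ₂. -/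
open scoped RealInnerProductSpace

set_option maxHeartbeats 1000000

/-- Abstract version of Theorem 3.1: uniqueness and Lipschitz stability for
electrode measurements approximating the continuum model. -/
theorem stmt_2
    {X : Type*} [NormedAddCommGroup X] [NormedSpace ℝ X]
    {H : Type*} [NormedAddCommGroup H] [InnerProductSpace ℝ H]
    (V : Submodule ℝ X) [FiniteDimensional ℝ V]
    (C : Set X) (hC : IsCompact C)
    (hdiff : ∀ σ₁ ∈ C, ∀ σ₂ ∈ C, σ₁ - σ₂ ∈ V)
    (D : C → (V →L[ℝ] (H →L[ℝ] H)))
    (hD : Continuous D)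
    (pos : ∀ (τ₁ τ₂ : C) (κ : V), ‖κ‖ = 1 →
      ∃ g : H, ‖g‖ = 1 ∧
        0 < max (⟪(D τ₁ κ) g, g⟫) (-⟪(D τ₂ κ) g, g⟫))
    (E : ℕ → Type*) [∀ M, NormedAddCommGroup (E M)] [∀ M, InnerProductSpace ℝ (E M)]
    (R : ∀ M : ℕ, C → (E M →L[ℝ] E M))
    (DM : ∀ M : ℕ, C → (V →L[ℝ] (E M →L[ℝ] E M)))
    (Q : ∀ M : ℕ, H →L[ℝ] E M)
    (K : ℝ) (hK : 0 < K)
    (ε : ℕ → ℝ) (hε : ∀ M, 0 ≤ ε M)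
    (hεlim : Filter.Tendsto ε Filter.atTop (nhds 0))
    (monoM : ∀ (M : ℕ) (σ₁ σ₂ : C) (J : E M),
      ⟪(DM M σ₂ ⟨(σ₁ : X) - (σ₂ : X), hdiff _ σ₁.2 _ σ₂.2⟩) J, J⟫
        ≤ ⟪(R M σ₁ - R M σ₂) J, J⟫)
    (hQ : ∀ (M : ℕ) (g : H), ‖Q M g‖ ≤ K * ‖g‖)
    (approx : ∀ (M : ℕ) (σ : C) (κ : V), ‖κ‖ = 1 → ∀ g : H, ‖g‖ = 1 →
      |⟪(D σ κ) g, g⟫ - ⟪(DM M σ κ) (Q M g), Q M g⟫| ≤ ε M) :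
    ∃ N : ℕ, ∃ c > 0, ∀ M ≥ N, ∀ (σ₁ σ₂ : C),
      (c * ‖(σ₁ : X) - (σ₂ : X)‖ ≤ ‖R M σ₁ - R M σ₂‖) ∧
      (R M σ₁ = R M σ₂ ↔ (σ₁ : X) = (σ₂ : X)) := by
  classical
  haveI : CompactSpace C := isCompact_iff_compactSpace.mp hC
  -- uniform positivity via compactness
  have key : ∃ δ > 0, ∀ (τ₁ τ₂ : C) (κ : V), ‖κ‖ = 1 →
      ∃ g : H, ‖g‖ = 1 ∧ δ ≤ max (⟪(D τ₁ κ) g, g⟫) (-⟪(D τ₂ κ) g, g⟫) := by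
    by_contra hcon
    push_neg at hcon
    have h' : ∀ n : ℕ, ∃ (τ₁ τ₂ : C) (κ : V), ‖κ‖ = 1 ∧
        ∀ g : H, ‖g‖ = 1 →
          max (⟪(D τ₁ κ) g, g⟫) (-⟪(D τ₂ κ) g, g⟫) < 1/((n:ℝ)+1) := by
      intro n
      obtain ⟨τ₁, τ₂, κ, hκ, hlt⟩ := hcon (1/((n:ℝ)+1)) (by positivity)
      exact ⟨τ₁, τ₂, κ, hκ, hlt⟩
    choose a b k hk hlt using h'
    set S : Set (↥C × ↥C × V) := Set.univ ×ˢ Set.univ ×ˢ Metric.sphere 0 1 with hSdef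
    have hS : IsCompact S :=
      isCompact_univ.prod (isCompact_univ.prod (isCompact_sphere 0 1))
    set p : ℕ → ↥C × ↥C × V := fun n => (a n, b n, k n) with hpdef
    have hp : ∀ n, p n ∈ S := by
      intro n
      refine ⟨Set.mem_univ _, Set.mem_univ _, ?_⟩
      simpa [mem_sphere_zero_iff_norm] using hk n
    obtain ⟨x, hxS, φ, hφ, hφt⟩ := hS.tendsto_subseq hp
    have hκx : ‖x.2.2‖ = 1 := mem_sphere_zero_iff_norm.mp hxS.2.2
    obtain ⟨g, hg, hgpos⟩ := pos x.1 x.2.1 x.2.2 hκx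
    set F : ↥C × ↥C × V → ℝ := fun q =>
      max (⟪(D q.1 q.2.2) g, g⟫) (-⟪(D q.2.1 q.2.2) g, g⟫) with hFdef
    have happ : Continuous fun q : (V →L[ℝ] (H →L[ℝ] H)) × V => q.1 q.2 :=
      isBoundedBilinearMap_apply.continuous
    have happ2 : Continuous fun q : (H →L[ℝ] H) × H => q.1 q.2 :=
      isBoundedBilinearMap_apply.continuous
    have h1 : Continuous fun q : ↥C × ↥C × V => ⟪(D q.1 q.2.2) g, g⟫ := by
      have : Continuous fun q : ↥C × ↥C × V => ((D q.1) q.2.2) g :=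
        happ2.comp ((happ.comp ((hD.comp continuous_fst).prodMk
          (continuous_snd.comp continuous_snd))).prodMk continuous_const)
      exact this.inner continuous_const
    have h2 : Continuous fun q : ↥C × ↥C × V => ⟪(D q.2.1 q.2.2) g, g⟫ := by
      have : Continuous fun q : ↥C × ↥C × V => ((D q.2.1) q.2.2) g :=
        happ2.comp ((happ.comp ((hD.comp (continuous_fst.comp continuous_snd)).prodMk
          (continuous_snd.comp continuous_snd))).prodMk continuous_const)
      exact this.inner continuous_const
    have hF : Continuous F := h1.max h2.neg
    have hT : Filter.Tendsto (fun n => F (p (φ n))) Filter.atTop (nhds (F x)) :=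
      (hF.tendsto x).comp hφt
    have hb : ∀ n, F (p (φ n)) ≤ 1/((n:ℝ)+1) := by
      intro n
      have h3 := hlt (φ n) g hg
      have h4 : 1/((φ n : ℝ)+1) ≤ 1/((n:ℝ)+1) := by
        apply one_div_le_one_div_of_le (by positivity)
        have : n ≤ φ n := hφ.le_apply
        exact_mod_cast Nat.succ_le_succ this
      exact le_trans h3.le h4
    have h0 : Filter.Tendsto (fun n : ℕ => 1/((n:ℝ)+1)) Filter.atTop (nhds 0) :=
      tendsto_one_div_add_atTop_nhds_zero_nat
    have hFx : F x ≤ 0 := le_of_tendsto_of_tendsto' hT h0 hb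
    have : (0:ℝ) < F x := hgpos
    linarith
  obtain ⟨δ, hδ, hkey⟩ := key
  obtain ⟨N, hN⟩ := Filter.eventually_atTop.mp
    (hεlim.eventually (gt_mem_nhds (half_pos hδ)))
  refine ⟨N, δ/(2*K^2), by positivity, ?_⟩
  intro M hM σ₁ σ₂
  by_cases he : (σ₁:X) = (σ₂:X)
  · have hss : σ₁ = σ₂ := Subtype.ext he
    exact ⟨by simp [hss], by simp [hss, he]⟩
  · have ht : 0 < ‖(σ₁:X) - (σ₂:X)‖ := by
      rw [norm_pos_iff]
      exact sub_ne_zero_of_ne he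
    set t := ‖(σ₁:X) - (σ₂:X)‖ with htdef
    set w : V := ⟨(σ₁:X) - (σ₂:X), hdiff _ σ₁.2 _ σ₂.2⟩ with hwdef
    have hwnorm : ‖w‖ = t := rfl
    set κ : V := t⁻¹ • w with hκdef
    have hκ : ‖κ‖ = 1 := by
      rw [hκdef, norm_smul, norm_inv, Real.norm_eq_abs, abs_of_pos ht, hwnorm,
        inv_mul_cancel₀ ht.ne']
    have hwκ : w = t • κ := (smul_inv_smul₀ ht.ne' w).symm
    obtain ⟨g, hg, hmax⟩ := hkey σ₂ σ₁ κ hκ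
    have hε2 : ε M < δ/2 := hN M hM
    set J := Q M g with hJdef
    have hJ : ‖J‖ ≤ K := by
      have := hQ M g
      rwa [hg, mul_one] at this
    have hv : t * (δ/2) ≤ |⟪(R M σ₁ - R M σ₂) J, J⟫| := by
      rcases le_max_iff.mp hmax with h1 | h2
      · -- δ ≤ ⟪D σ₂ κ g, g⟫
        have ha := abs_le.mp (approx M σ₂ κ hκ g hg)
        have hDMb : δ/2 ≤ ⟪(DM M σ₂ κ) J, J⟫ := by
          linarith [ha.1, ha.2]
        have hm := monoM M σ₁ σ₂ J
        have hwκ' : (⟨(σ₁:X) - (σ₂:X), hdiff _ σ₁.2 _ σ₂.2⟩ : V) = t • κ := hwκ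
        rw [hwκ'] at hm
        have hsm : t * ⟪(DM M σ₂ κ) J, J⟫ ≤ ⟪(R M σ₁ - R M σ₂) J, J⟫ := by
          simpa [map_smul, real_inner_smul_left] using hm
        have : t * (δ/2) ≤ ⟪(R M σ₁ - R M σ₂) J, J⟫ := by nlinarith
        exact le_trans this (le_abs_self _)
      · -- δ ≤ -⟪D σ₁ κ g, g⟫
        have ha := abs_le.mp (approx M σ₁ κ hκ g hg)
        have hDMb : ⟪(DM M σ₁ κ) J, J⟫ ≤ -(δ/2) := by
          linarith [ha.1, ha.2]
        have hm := monoM M σ₂ σ₁ J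
        have he2 : (⟨(σ₂:X) - (σ₁:X), hdiff _ σ₂.2 _ σ₁.2⟩ : V) = (-t) • κ := by
          rw [neg_smul, ← hwκ]
          exact Subtype.ext (by simp [hwdef])
        rw [he2] at hm
        have hsm : -t * ⟪(DM M σ₁ κ) J, J⟫ ≤ -⟪(R M σ₁ - R M σ₂) J, J⟫ := by
          have hrw : ⟪(R M σ₂ - R M σ₁) J, J⟫ = -⟪(R M σ₁ - R M σ₂) J, J⟫ := by
            simp only [ContinuousLinearMap.sub_apply, inner_sub_left]
            ring
          rw [hrw] at hm
          simpa [map_smul, real_inner_smul_left] using hm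
        have : ⟪(R M σ₁ - R M σ₂) J, J⟫ ≤ -(t * (δ/2)) := by nlinarith
        exact le_abs.mpr (Or.inr (by linarith))
    have hAb : |⟪(R M σ₁ - R M σ₂) J, J⟫| ≤ ‖R M σ₁ - R M σ₂‖ * K^2 := by
      have h1 := abs_real_inner_le_norm ((R M σ₁ - R M σ₂) J) J
      have h2 := (R M σ₁ - R M σ₂).le_opNorm J
      have h3 : (0:ℝ) ≤ ‖R M σ₁ - R M σ₂‖ := norm_nonneg _
      have h4 : (0:ℝ) ≤ ‖J‖ := norm_nonneg _
      calc |⟪(R M σ₁ - R M σ₂) J, J⟫| ≤ ‖(R M σ₁ - R M σ₂) J‖ * ‖J‖ := h1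
        _ ≤ (‖R M σ₁ - R M σ₂‖ * ‖J‖) * ‖J‖ := mul_le_mul_of_nonneg_right h2 h4
        _ ≤ (‖R M σ₁ - R M σ₂‖ * K) * K :=
            mul_le_mul (mul_le_mul_of_nonneg_left hJ h3) hJ h4 (by positivity)
        _ = ‖R M σ₁ - R M σ₂‖ * K^2 := by ring
    have hfinal : δ/(2*K^2) * t ≤ ‖R M σ₁ - R M σ₂‖ := by
      rw [div_mul_eq_mul_div, div_le_iff₀ (by positivity)]
      nlinarith
    refine ⟨hfinal, ?_, fun h => absurd h he⟩
    intro hR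
    exfalso
    have : ‖R M σ₁ - R M σ₂‖ = 0 := by simp [hR]
    rw [this] at hfinal
    have : 0 < δ/(2*K^2) * t := by positivity
    linarith
end

section
/- Let K be a compact metric space, X a real normed vector space, and (G_n)_{n∈ℕ} a nondecreasing sequence of linear subspaces of X whose union ⋃_n G_n is dense in X. Let f : K × X → ℝ be continuous. If for every k ∈ K there exists g ∈ X with ‖g‖ = 1 and f(k, g) > 0, then there exist N ∈ ℕ and c > 0 such that for every n ≥ N and every k ∈ K there exists g ∈ G_n with ‖g‖ = 1 and f(k, g) ≥ c. -/
/-- Abstract exhaustion lemma: pointwise positivity of a continuous function on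
unit vectors transfers, uniformly over a compact set, to unit vectors of the
subspaces of a nondecreasing exhausting sequence. -/
theorem stmt_7
    {K : Type*} [MetricSpace K] [CompactSpace K]
    {X : Type*} [NormedAddCommGroup X] [NormedSpace ℝ X]
    (G : ℕ → Submodule ℝ X)
    (hGmono : Monotone G)
    (hGdense : Dense (⋃ n, (G n : Set X)))
    (f : K × X → ℝ) (hf : Continuous f)
    (hpos : ∀ k : K, ∃ g : X, ‖g‖ = 1 ∧ 0 < f (k, g)) :
    ∃ N : ℕ, ∃ c > 0, ∀ n ≥ N, ∀ k : K,
      ∃ g ∈ G n, ‖g‖ = 1 ∧ c ≤ f (k, g) := by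
  rcases isEmpty_or_nonempty K with hK | hK
  · exact ⟨0, 1, one_pos, fun n _ k => (IsEmpty.false k).elim⟩
  -- For each k, find a unit vector in some G n where f is ≥ some c > 0 on a ball around k
  have key : ∀ k : K, ∃ n : ℕ, ∃ u : X, u ∈ G n ∧ ‖u‖ = 1 ∧
      ∃ c > (0 : ℝ), ∃ r > (0 : ℝ), ∀ k' : K, dist k' k < r → c ≤ f (k', u) := by
    intro k
    obtain ⟨g, hg, hfg⟩ := hpos k
    -- open set where f > f(k,g)/2
    have hopen : IsOpen (f ⁻¹' Set.Ioi (f (k, g) / 2)) := isOpen_Ioi.preimage hf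
    have hmem : (k, g) ∈ f ⁻¹' Set.Ioi (f (k, g) / 2) := by
      simp only [Set.mem_preimage, Set.mem_Ioi]
      linarith
    obtain ⟨ε, hε, hball⟩ := Metric.isOpen_iff.1 hopen _ hmem
    -- approximate g by h in some G n
    set δ : ℝ := min (ε / 4) (1 / 4) with hδdef
    have hδ : 0 < δ := lt_min (by linarith) (by norm_num)
    obtain ⟨h, hhmem, hhd⟩ := hGdense.exists_dist_lt g hδ
    obtain ⟨_, ⟨n, rfl⟩, hn⟩ := hhmem
    have hdist : ‖h - g‖ < δ := by
      rw [← dist_eq_norm]; rw [dist_comm]; exact hhd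
    have hhnorm : (3 : ℝ) / 4 ≤ ‖h‖ := by
      have h1 : ‖g‖ - ‖h‖ ≤ ‖g - h‖ := norm_sub_norm_le g h
      have h2 : ‖g - h‖ = ‖h - g‖ := norm_sub_rev g h
      have : δ ≤ 1 / 4 := min_le_right _ _
      rw [hg] at h1; linarith
    have hhne : h ≠ 0 := by
      intro h0; rw [h0, norm_zero] at hhnorm; linarith
    have hhpos : (0 : ℝ) < ‖h‖ := by linarith
    refine ⟨n, ‖h‖⁻¹ • h, (G n).smul_mem _ hn, ?_, f (k, g) / 2, by linarith, ε / 2,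
      by linarith, ?_⟩
    · rw [norm_smul, norm_inv, norm_norm, inv_mul_cancel₀ (ne_of_gt hhpos)]
    · intro k' hk'
      have hug : ‖‖h‖⁻¹ • h - g‖ < ε / 2 := by
        have e1 : ‖‖h‖⁻¹ • h - h‖ = |1 - ‖h‖| := by
          have : ‖h‖⁻¹ • h - h = (‖h‖⁻¹ - 1) • h := by rw [sub_smul, one_smul]
          rw [this]
          calc ‖(‖h‖⁻¹ - 1) • h‖ = |‖h‖⁻¹ - 1| * ‖h‖ := by rw [norm_smul, Real.norm_eq_abs]
            _ = |(‖h‖⁻¹ - 1) * ‖h‖| := by rw [abs_mul, abs_of_pos hhpos]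
            _ = |1 - ‖h‖| := by rw [sub_mul, inv_mul_cancel₀ hhpos.ne', one_mul]
        have e2 : |1 - ‖h‖| ≤ ‖h - g‖ := by
          have := abs_norm_sub_norm_le h g
          rw [hg] at this
          rwa [abs_sub_comm] at this
        calc ‖‖h‖⁻¹ • h - g‖ ≤ ‖‖h‖⁻¹ • h - h‖ + ‖h - g‖ := norm_sub_le_norm_sub_add_norm_sub _ _ _
          _ ≤ ‖h - g‖ + ‖h - g‖ := by rw [e1]; linarith
          _ < δ + δ := by linarith
          _ ≤ ε / 4 + ε / 4 := by
              have : δ ≤ ε / 4 := min_le_left _ _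
              linarith
          _ = ε / 2 := by ring
      have hmem' : (k', ‖h‖⁻¹ • h) ∈ Metric.ball (k, g) ε := by
        rw [Metric.mem_ball, Prod.dist_eq]
        refine max_lt (by simpa using lt_of_lt_of_le hk' (by linarith)) ?_
        rw [dist_eq_norm]
        linarith
      have := hball hmem'
      simp only [Set.mem_preimage, Set.mem_Ioi] at this
      linarith
  choose n u hu hnorm c hc r hr hcov using key
  -- finite subcover
  obtain ⟨t, ht⟩ := isCompact_univ.elim_finite_subcover (fun k => Metric.ball k (r k))
    (fun k => Metric.isOpen_ball) (fun k _ => Set.mem_iUnion.2 ⟨k, Metric.mem_ball_self (hr k)⟩)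
  have htne : t.Nonempty := by
    obtain ⟨k⟩ := hK
    obtain ⟨i, hi, _⟩ := Set.mem_iUnion₂.1 (ht (Set.mem_univ k))
    exact ⟨i, hi⟩
  refine ⟨t.sup n, t.inf' htne c, ?_, ?_⟩
  · exact (Finset.lt_inf'_iff htne).2 fun i _ => hc i
  · intro m hm k
    obtain ⟨i, hi, hki⟩ := Set.mem_iUnion₂.1 (ht (Set.mem_univ k))
    refine ⟨u i, ?_, hnorm i, ?_⟩
    · exact hGmono (le_trans (Finset.le_sup hi) hm) (hu i)
    · exact le_trans (Finset.inf'_le _ hi) (hcov i k hki)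
end
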